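/- For 0 < τ < 1 and symmetric positive definite matrices K̃, K with K = L L^T, the quantity D_τ = tr(-(1/(τ(1-τ))) M^τ + (1/(1-τ)) M + (1/τ) I), where M = L^{-1} K̃ L^{-T}, is nonnegative, and it equals zero if and only if K̃ = K. -/

import Mathlib

open Matrix

/-- Spectral functional calculus for Hermitian real matrices (junk value `0` otherwise). -/
noncomputable def matFun {n : ℕ} (f : ℝ → ℝ) (A : Matrix (Fin n) (Fin n) ℝ) :
    Matrix (Fin n) (Fin n) ℝ :=
  if hA : A.IsHermitian then
    (Matrix.IsHermitian.eigenvectorUnitary hA : Matrix (Fin n) (Fin n) ℝ) *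
      Matrix.diagonal (fun i => f (hA.eigenvalues i)) *
      star (Matrix.IsHermitian.eigenvectorUnitary hA : Matrix (Fin n) (Fin n) ℝ)
  else 0

/-- Matrix logarithm of a symmetric positive definite matrix, via spectral calculus. -/
noncomputable def mlog {n : ℕ} (A : Matrix (Fin n) (Fin n) ℝ) : Matrix (Fin n) (Fin n) ℝ :=
  matFun Real.log A

/-- Real power of a symmetric positive definite matrix, via spectral calculus. -/
noncomputable def mpow {n : ℕ} (A : Matrix (Fin n) (Fin n) ℝ) (t : ℝ) :
    Matrix (Fin n) (Fin n) ℝ :=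
  matFun (fun x => x ^ t) A

/-!
Write `M = L⁻¹ K̃ L⁻ᵀ = U diag(λ) Uᵀ`. Then `D_τ = ∑ φ_τ(λᵢ)` with
`φ_τ(x) = (τ x + (1 - τ) - x ^ τ) / (τ (1 - τ))`, and by the weighted AM-GM inequality
`x ^ τ · 1 ^ (1 - τ) ≤ τ x + (1 - τ) · 1` each term is nonnegative and vanishes exactly at `x = 1`.
So `D_τ = 0` iff every eigenvalue of `M` is `1`, i.e. `M = 1`, i.e. `K̃ = L Lᵀ = K`.
-/

namespace Real

lemma rpow_le_mul_add_one_sub {x τ : ℝ} (hx : 0 ≤ x) (hτ0 : 0 ≤ τ) (hτ1 : τ ≤ 1) :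
    x ^ τ ≤ τ * x + (1 - τ) := by
  simpa using geom_mean_le_arith_mean2_weighted hτ0 (sub_nonneg.2 hτ1) hx zero_le_one (by ring)

lemma rpow_eq_mul_add_one_sub_iff {x τ : ℝ} (hx : 0 ≤ x) (hτ0 : 0 < τ) (hτ1 : τ < 1) :
    x ^ τ = τ * x + (1 - τ) ↔ x = 1 := by
  simpa using
    geom_mean_eq_arith_mean2_weighted_iff_of_pos hτ0 (sub_pos.2 hτ1) hx zero_le_one (by ring)

end Real

noncomputable def tauDivergenceGenerator (τ x : ℝ) : ℝ :=
  -(1 / (τ * (1 - τ))) * x ^ τ + 1 / (1 - τ) * x + 1 / τ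

lemma tauDivergenceGenerator_eq {τ : ℝ} (hτ0 : 0 < τ) (hτ1 : τ < 1) (x : ℝ) :
    tauDivergenceGenerator τ x = (τ * x + (1 - τ) - x ^ τ) / (τ * (1 - τ)) := by
  have : 1 - τ ≠ 0 := by linarith
  unfold tauDivergenceGenerator
  field_simp
  ring

lemma tauDivergenceGenerator_nonneg {τ x : ℝ} (hτ0 : 0 < τ) (hτ1 : τ < 1) (hx : 0 ≤ x) :
    0 ≤ tauDivergenceGenerator τ x := by
  have : 0 < 1 - τ := by linarith
  have := Real.rpow_le_mul_add_one_sub hx hτ0.le hτ1.le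
  rw [tauDivergenceGenerator_eq hτ0 hτ1]
  positivity

lemma tauDivergenceGenerator_eq_zero_iff {τ x : ℝ} (hτ0 : 0 < τ) (hτ1 : τ < 1) (hx : 0 ≤ x) :
    tauDivergenceGenerator τ x = 0 ↔ x = 1 := by
  have : 0 < 1 - τ := by linarith
  rw [tauDivergenceGenerator_eq hτ0 hτ1, div_eq_zero_iff, sub_eq_zero, eq_comm,
    Real.rpow_eq_mul_add_one_sub_iff hx hτ0 hτ1]
  simp [(mul_pos hτ0 this).ne']

namespace Matrix.IsHermitian

variable {𝕜 ι : Type*} [RCLike 𝕜] [Fintype ι] [DecidableEq ι] {A : Matrix ι ι 𝕜}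

lemma eigenvalues_eq_one_iff (hA : A.IsHermitian) : hA.eigenvalues = 1 ↔ A = 1 := by
  constructor
  · intro h
    rw [hA.spectral_theorem, h]
    simp
  · rintro rfl
    funext i
    have hv := hA.mulVec_eigenvectorBasis i
    have hne : (hA.eigenvectorBasis i : ι → 𝕜) ≠ 0 :=
      (WithLp.ofLp_eq_zero 2).ne.2 <| hA.eigenvectorBasis.orthonormal.ne_zero i
    rw [one_mulVec] at hv
    exact smul_left_injective ℝ hne (by simpa using hv.symm)

end Matrix.IsHermitian

section Congruence

variable {ι : Type*} [Fintype ι] [DecidableEq ι] {A L : Matrix ι ι ℝ}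

lemma Matrix.PosDef.inv_mul_mul_transpose_inv (hA : A.PosDef) (hL : IsUnit L.det) :
    (L⁻¹ * A * Lᵀ⁻¹).PosDef := by
  have hinj : Function.Injective L⁻¹.vecMul :=
    vecMul_injective_iff_isUnit.mpr ((isUnit_iff_isUnit_det _).mpr (isUnit_nonsing_inv_det L hL))
  simpa [← transpose_nonsing_inv, conjTranspose_eq_transpose_of_trivial] using
    hA.mul_mul_conjTranspose_same hinj

lemma Matrix.inv_mul_mul_transpose_inv_eq_one_iff (hL : IsUnit L.det) :
    L⁻¹ * A * Lᵀ⁻¹ = 1 ↔ A = L * Lᵀ := by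
  have := L.invertibleOfIsUnitDet hL
  rw [mul_inv_eq_iff_eq_mul_of_invertible, one_mul, inv_mul_eq_iff_eq_mul_of_invertible]

end Congruence

lemma trace_matFun {n : ℕ} (f : ℝ → ℝ) {A : Matrix (Fin n) (Fin n) ℝ} (hA : A.IsHermitian) :
    (matFun f A).trace = ∑ i, f (hA.eigenvalues i) := by
  rw [matFun, dif_pos hA, trace_mul_cycle,
    mem_unitaryGroup_iff'.mp hA.eigenvectorUnitary.2, one_mul, trace_diagonal]

lemma trace_tauDivergence_eq_sum {n : ℕ} (τ : ℝ) {M : Matrix (Fin n) (Fin n) ℝ}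
    (hM : M.IsHermitian) :
    (-((1 / (τ * (1 - τ))) • mpow M τ) + (1 / (1 - τ)) • M
        + (1 / τ) • (1 : Matrix (Fin n) (Fin n) ℝ)).trace
      = ∑ i, tauDivergenceGenerator τ (hM.eigenvalues i) := by
  simp only [trace_add, trace_neg, trace_smul, mpow, trace_matFun _ hM,
    hM.trace_eq_sum_eigenvalues, trace_one, tauDivergenceGenerator, Finset.sum_add_distrib,
    Finset.mul_sum, smul_eq_mul, neg_mul, Finset.sum_neg_distrib, Finset.sum_const,
    Finset.card_univ, Fintype.card_fin, nsmul_eq_mul, RCLike.ofReal_real_eq_id, id_eq]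
  ring

theorem stmt_2_general {n : ℕ} (τ : ℝ) (hτ0 : 0 < τ) (hτ1 : τ < 1)
    (K Kt L : Matrix (Fin n) (Fin n) ℝ)
    (hKt : Kt.PosDef) (hL : K = L * Lᵀ) (hLu : IsUnit L.det) :
    0 ≤ (-((1 / (τ * (1 - τ))) • mpow (L⁻¹ * Kt * Lᵀ⁻¹) τ) +
          (1 / (1 - τ)) • (L⁻¹ * Kt * Lᵀ⁻¹) + (1 / τ) • (1 : Matrix (Fin n) (Fin n) ℝ)).trace ∧
    ((-((1 / (τ * (1 - τ))) • mpow (L⁻¹ * Kt * Lᵀ⁻¹) τ) +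
          (1 / (1 - τ)) • (L⁻¹ * Kt * Lᵀ⁻¹) + (1 / τ) • (1 : Matrix (Fin n) (Fin n) ℝ)).trace = 0
      ↔ Kt = K) := by
  have hM := hKt.inv_mul_mul_transpose_inv hLu
  have heig i : 0 ≤ hM.1.eigenvalues i := (hM.eigenvalues_pos i).le
  rw [trace_tauDivergence_eq_sum τ hM.1]
  refine ⟨Finset.sum_nonneg fun i _ ↦ tauDivergenceGenerator_nonneg hτ0 hτ1 (heig i), ?_⟩
  rw [Finset.sum_eq_zero_iff_of_nonneg fun i _ ↦ tauDivergenceGenerator_nonneg hτ0 hτ1 (heig i),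
    hL, ← inv_mul_mul_transpose_inv_eq_one_iff hLu, ← hM.1.eigenvalues_eq_one_iff, funext_iff]
  simp only [Finset.mem_univ, true_implies, tauDivergenceGenerator_eq_zero_iff hτ0 hτ1 (heig _),
    Pi.one_apply]

/-- nonnegativity of the τ-divergence for `0 < τ < 1`,
`D_τ = tr(-(1/(τ(1-τ))) M^τ + (1/(1-τ)) M + (1/τ) I)` with `M = L⁻¹ K̃ L⁻ᵀ`,
with equality iff `K̃ = K`. -/
theorem stmt_2 {n : ℕ} (τ : ℝ) (hτ0 : 0 < τ) (hτ1 : τ < 1)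
    (K Kt L : Matrix (Fin n) (Fin n) ℝ)
    (hK : K.PosDef) (hKt : Kt.PosDef) (hL : K = L * Lᵀ) (hLu : IsUnit L.det) :
    0 ≤ (-((1 / (τ * (1 - τ))) • mpow (L⁻¹ * Kt * Lᵀ⁻¹) τ) +
          (1 / (1 - τ)) • (L⁻¹ * Kt * Lᵀ⁻¹) + (1 / τ) • (1 : Matrix (Fin n) (Fin n) ℝ)).trace ∧
    ((-((1 / (τ * (1 - τ))) • mpow (L⁻¹ * Kt * Lᵀ⁻¹) τ) +
          (1 / (1 - τ)) • (L⁻¹ * Kt * Lᵀ⁻¹) + (1 / τ) • (1 : Matrix (Fin n) (Fin n) ℝ)).trace = 0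
      ↔ Kt = K) :=
  stmt_2_general τ hτ0 hτ1 K Kt L hKt hL hLu
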